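/- arXiv:1310.2032 — 2 statements merged into one kernel-verified Lean document; each statement's English description precedes it below -/
import Mathlib

section
/- Let G be a cyclic group of order n generated by x. Then the degree of x^m in the power graph P(G) equals n/gcd(m,n) - 1 + the sum of φ(n/d) over all divisors d of gcd(m,n) with d ≠ gcd(m,n), where φ is Euler's totient function. -/
def powerGraph (G : Type*) [Group G] : SimpleGraph G where
  Adj x y := x ≠ y ∧ ((∃ m : ℕ, 0 < m ∧ y = x ^ m) ∨ (∃ m : ℕ, 0 < m ∧ x = y ^ m))
  symm := ⟨fun x y h => ⟨h.1.symm, h.2.symm⟩⟩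
  loopless := ⟨fun x h => h.1 rfl⟩

def powerGraphStar (G : Type*) [Group G] : SimpleGraph {g : G // g ≠ 1} :=
  (powerGraph G).induce {g : G | g ≠ 1}

/-!
In a cyclic group of order `n` there is exactly one subgroup of each order dividing `n`, so `z` is
a power of `y` iff `orderOf z ∣ orderOf y`. Hence, with `k = orderOf y`, the neighbours of `y` are
the `k - 1` other elements of `⟨y⟩` together with the elements whose order is a proper multiple
of `k`. Sorting the latter by the index `d = n / orderOf z`, which runs over the proper divisors of
`n / k`, each class consists of the `φ (n / d)` elements of order `n / d`. For `y = x ^ m` one has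
`n / k = gcd m n`.
-/

open Finset Subgroup
open scoped Nat

theorem Nat.div_dvd_div_left_iff {n a b : ℕ} (hn : n ≠ 0) (ha : a ∣ n) (hb : b ∣ n) :
    n / a ∣ n / b ↔ b ∣ a := by
  refine ⟨fun h => ?_, Nat.div_dvd_div_left ha⟩
  have := Nat.div_dvd_div_left (Nat.div_dvd_of_dvd hb) h
  rwa [Nat.div_div_self hb hn, Nat.div_div_self ha hn] at this

section powerGraph

variable {G : Type*} [Group G]

theorem exists_pos_pow_eq_iff_mem_zpowers [Finite G] {x y : G} :
    (∃ m : ℕ, 0 < m ∧ y = x ^ m) ↔ y ∈ zpowers x := by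
  rw [← mem_powers_iff_mem_zpowers]
  constructor
  · rintro ⟨m, -, rfl⟩
    exact ⟨m, rfl⟩
  · rintro ⟨m, rfl⟩
    refine ⟨m + orderOf x, by have := orderOf_pos x; omega, ?_⟩
    rw [pow_add, pow_orderOf_eq_one, mul_one]

theorem powerGraph_adj_iff [Finite G] {x y : G} :
    (powerGraph G).Adj x y ↔ x ≠ y ∧ (y ∈ zpowers x ∨ x ∈ zpowers y) := by
  simp only [powerGraph, exists_pos_pow_eq_iff_mem_zpowers]

theorem IsCyclic.mem_zpowers_iff_orderOf_dvd [Finite G] [IsCyclic G] {y z : G} :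
    z ∈ zpowers y ↔ orderOf z ∣ orderOf y := by
  refine ⟨orderOf_dvd_of_mem_zpowers, fun h => ?_⟩
  classical
  have := Fintype.ofFinite G
  set S : Set G := {b | b ^ orderOf y = 1}
  have hsub : (zpowers y : Set G) ⊆ S := fun b hb => by
    obtain ⟨j, rfl⟩ := mem_powers_iff_mem_zpowers.2 hb
    exact orderOf_dvd_iff_pow_eq_one.1 (orderOf_pow_dvd j)
  -- a cyclic group has at most `orderOf y` solutions of `b ^ orderOf y = 1`,
  -- and `zpowers y` already provides that many
  have hcard : S.ncard ≤ (zpowers y : Set G).ncard := by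
    rw [Set.ncard_eq_toFinset_card', Set.toFinset_ofPred,
      ← Nat.card_coe_set_eq (zpowers y : Set G), SetLike.coe_sort_coe, Nat.card_zpowers]
    exact IsCyclic.card_pow_eq_one_le (orderOf_pos y)
  rw [← SetLike.mem_coe, Set.eq_of_subset_of_ncard_le hsub hcard]
  exact orderOf_dvd_iff_pow_eq_one.1 h

theorem IsCyclic.powerGraph_adj_iff [Finite G] [IsCyclic G] {y z : G} :
    (powerGraph G).Adj y z ↔ y ≠ z ∧ (orderOf z ∣ orderOf y ∨ orderOf y ∣ orderOf z) := by
  simp only [_root_.powerGraph_adj_iff, IsCyclic.mem_zpowers_iff_orderOf_dvd]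

theorem IsCyclic.neighborSet_powerGraph [Finite G] [IsCyclic G] (y : G) :
    (powerGraph G).neighborSet y =
      ((zpowers y : Set G) \ {y}) ∪ {z | orderOf y ∣ orderOf z ∧ orderOf z ≠ orderOf y} := by
  ext z
  simp only [SimpleGraph.mem_neighborSet, IsCyclic.powerGraph_adj_iff, Set.mem_union,
    Set.mem_sdiff, SetLike.mem_coe, IsCyclic.mem_zpowers_iff_orderOf_dvd, Set.mem_singleton_iff,
    Set.mem_ofPred_eq]
  constructor
  · rintro ⟨hne, h | h⟩
    · exact Or.inl ⟨h, Ne.symm hne⟩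
    · by_cases heq : orderOf z = orderOf y
      · exact Or.inl ⟨heq.dvd, Ne.symm hne⟩
      · exact Or.inr ⟨h, heq⟩
  · rintro (⟨h, hne⟩ | ⟨h, hne⟩)
    · exact ⟨Ne.symm hne, Or.inl h⟩
    · exact ⟨by rintro rfl; exact hne rfl, Or.inr h⟩

end powerGraph

section counting

variable {G : Type*} [Group G] [Fintype G] [IsCyclic G]

theorem IsCyclic.card_filter_card_div_orderOf_mem {D : Finset ℕ}
    (hD : ∀ d ∈ D, d ∣ Fintype.card G) :
    #{z : G | Fintype.card G / orderOf z ∈ D} = ∑ d ∈ D, φ (Fintype.card G / d) := by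
  set n := Fintype.card G
  have hn : n ≠ 0 := Fintype.card_ne_zero
  rw [card_eq_sum_card_fiberwise (s := {z : G | n / orderOf z ∈ D}) (t := D)
    (f := fun z => n / orderOf z) fun z hz => (mem_filter.1 hz).2]
  refine sum_congr rfl fun d hd => ?_
  have hdn := hD d hd
  rw [← IsCyclic.card_orderOf_eq_totient (Nat.div_dvd_of_dvd hdn), filter_filter]
  refine congrArg card (filter_congr fun z _ => ?_)
  have key : n / orderOf z = d ↔ orderOf z = n / d := by
    rw [← Nat.div_eq_iff_eq_of_dvd_dvd hn orderOf_dvd_card (Nat.div_dvd_of_dvd hdn),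
      Nat.div_div_self hdn hn]
  exact ⟨fun h => key.1 h.2, fun h => ⟨key.2 h ▸ hd, key.2 h⟩⟩

theorem IsCyclic.ncard_setOf_dvd_orderOf_ne {k : ℕ} (hk : k ∣ Fintype.card G) :
    {z : G | k ∣ orderOf z ∧ orderOf z ≠ k}.ncard =
      ∑ d ∈ (Fintype.card G / k).divisors.erase (Fintype.card G / k), φ (Fintype.card G / d) := by
  set n := Fintype.card G
  have hn : n ≠ 0 := Fintype.card_ne_zero
  have hnk : n / k ≠ 0 := (Nat.div_ne_zero_iff_of_dvd hk).2 ⟨hn, fun hk0 => hn (Nat.eq_zero_of_zero_dvd (hk0 ▸ hk))⟩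
  have hmem (z : G) :
      n / orderOf z ∈ (n / k).divisors.erase (n / k) ↔ k ∣ orderOf z ∧ orderOf z ≠ k := by
    rw [mem_erase, Nat.mem_divisors, Nat.div_dvd_div_left_iff hn orderOf_dvd_card hk, Ne,
      Nat.div_eq_iff_eq_of_dvd_dvd hn orderOf_dvd_card hk]
    tauto
  rw [← IsCyclic.card_filter_card_div_orderOf_mem fun d hd => ?_]
  · rw [Set.ncard_eq_toFinset_card', Set.toFinset_ofPred]
    exact congrArg card (filter_congr fun z _ => (hmem z).symm)
  · exact (Nat.dvd_of_mem_divisors (mem_of_mem_erase hd)).trans (Nat.div_dvd_of_dvd hk)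

theorem IsCyclic.ncard_neighborSet_powerGraph (y : G) :
    ((powerGraph G).neighborSet y).ncard = orderOf y - 1 +
      ∑ d ∈ (Fintype.card G / orderOf y).divisors.erase (Fintype.card G / orderOf y),
        φ (Fintype.card G / d) := by
  have hdisj : Disjoint ((zpowers y : Set G) \ {y})
      {z | orderOf y ∣ orderOf z ∧ orderOf z ≠ orderOf y} := by
    refine Set.disjoint_left.2 fun z hz hz' => hz'.2 (Nat.dvd_antisymm ?_ hz'.1)
    exact IsCyclic.mem_zpowers_iff_orderOf_dvd.1 hz.1
  rw [IsCyclic.neighborSet_powerGraph, Set.ncard_union_eq hdisj,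
    Set.ncard_sdiff_singleton_of_mem (mem_zpowers y), ← Nat.card_coe_set_eq, SetLike.coe_sort_coe,
    Nat.card_zpowers, IsCyclic.ncard_setOf_dvd_orderOf_ne orderOf_dvd_card]

end counting

theorem degree_in_cyclic_powerGraph (G : Type*) [Group G] [Fintype G] (x : G)
    (hx : ∀ g : G, g ∈ Subgroup.zpowers x) (n : ℕ) (hn : Fintype.card G = n) (m : ℕ) :
    ((powerGraph G).neighborSet (x ^ m)).ncard =
      n / Nat.gcd m n - 1 +
        ∑ d ∈ (Nat.gcd m n).divisors.erase (Nat.gcd m n), Nat.totient (n / d) := by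
  have : IsCyclic G := ⟨⟨x, hx⟩⟩
  have hox : orderOf x = n := by
    rw [← hn, ← Nat.card_eq_fintype_card]
    exact orderOf_eq_card_of_forall_mem_zpowers hx
  have hxm : orderOf (x ^ m) = n / Nat.gcd m n := by rw [orderOf_pow, hox, Nat.gcd_comm]
  rw [IsCyclic.ncard_neighborSet_powerGraph, hxm, hn,
    Nat.div_div_self (Nat.gcd_dvd_right m n) (hn ▸ Fintype.card_ne_zero)]
end

section
/- If G is a finite group whose center has order divisible by at least two distinct primes, then the graph P*(G) obtained from the power graph of G by deleting the identity is connected. -/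
/-!
Let `a, b` be central elements of distinct prime orders `p, q`. Commuting elements `x, c` of
coprime orders are both powers of `x * c`, so they lie in one component of `P*(G)`; in particular
`b` is joined to `a`. An element `x ≠ 1` is joined to `a` directly when `p ∤ |x|`, and otherwise
through its power of order `p`, which is joined to `b`.
-/

theorem Commute.exists_pow_mul_eq_left {G : Type*} [Group G] {x c : G} (hxc : Commute x c)
    (hcop : (orderOf x).Coprime (orderOf c)) : ∃ m : ℕ, (x * c) ^ m = x := by
  obtain ⟨m, hm⟩ := exists_pow_eq_self_of_coprime hcop.symm
  refine ⟨orderOf c * m, ?_⟩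
  rw [pow_mul, hxc.mul_pow, pow_orderOf_eq_one, mul_one, hm]

namespace powerGraphStar

variable {G : Type*} [Group G]

theorem reachable_of_eq_pow {x y : G} (hx : x ≠ 1) (hy : y ≠ 1) {m : ℕ} (hm : y = x ^ m) :
    (powerGraphStar G).Reachable ⟨x, hx⟩ ⟨y, hy⟩ := by
  rcases eq_or_ne x y with rfl | hne
  · rfl
  have hm_pos : 0 < m := Nat.pos_of_ne_zero fun h => hy (by rw [hm, h, pow_zero])
  exact SimpleGraph.Adj.reachable (G := powerGraphStar G) ⟨hne, Or.inl ⟨m, hm_pos, hm⟩⟩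

theorem reachable_of_commute_of_coprime {x c : G} (hx : x ≠ 1) (hc : c ≠ 1)
    (hxc : Commute x c) (hcop : (orderOf x).Coprime (orderOf c)) :
    (powerGraphStar G).Reachable ⟨x, hx⟩ ⟨c, hc⟩ := by
  obtain ⟨k, hk⟩ := hxc.exists_pow_mul_eq_left hcop
  obtain ⟨l, hl⟩ := hxc.symm.exists_pow_mul_eq_left hcop.symm
  rw [← hxc.eq] at hl
  have hxc_ne : x * c ≠ 1 := fun h => hx (by rw [← hk, h, one_pow])
  exact (reachable_of_eq_pow hxc_ne hx hk.symm).symm.trans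
    (reachable_of_eq_pow hxc_ne hc hl.symm)

theorem reachable_of_mem_center {x a : G} (hx : x ≠ 1) (ha : a ≠ 1)
    (ha_center : a ∈ Subgroup.center G) (hprime : (orderOf a).Prime)
    (hndvd : ¬orderOf a ∣ orderOf x) :
    (powerGraphStar G).Reachable ⟨x, hx⟩ ⟨a, ha⟩ :=
  reachable_of_commute_of_coprime hx ha (Subgroup.mem_center_iff.mp ha_center x)
    (hprime.coprime_iff_not_dvd.mpr hndvd).symm

end powerGraphStar

theorem exists_mem_center_orderOf_eq {G : Type*} [Group G] [Finite G] {p : ℕ} (hp : p.Prime)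
    (hdvd : p ∣ Nat.card (Subgroup.center G)) : ∃ a ∈ Subgroup.center G, orderOf a = p := by
  have : Fact p.Prime := ⟨hp⟩
  obtain ⟨a, ha⟩ := exists_prime_orderOf_dvd_card' (G := Subgroup.center G) p hdvd
  exact ⟨a, a.2, by rw [Subgroup.orderOf_coe, ha]⟩

theorem powerGraphStar_connected_of_center (G : Type*) [Group G] [Fintype G]
    (h : ∃ p q : ℕ, p.Prime ∧ q.Prime ∧ p ≠ q ∧
      p ∣ Nat.card (Subgroup.center G) ∧ q ∣ Nat.card (Subgroup.center G)) :
    (powerGraphStar G).Connected := by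
  obtain ⟨p, q, hp, hq, hpq, hpd, hqd⟩ := h
  obtain ⟨a, ha_center, hoa⟩ := exists_mem_center_orderOf_eq hp hpd
  obtain ⟨b, hb_center, hob⟩ := exists_mem_center_orderOf_eq hq hqd
  have ne_one {y : G} {r : ℕ} (hr : r.Prime) (hy : orderOf y = r) : y ≠ 1 := fun h1 =>
    hr.one_lt.ne' (by rw [← hy, h1, orderOf_one])
  have ha := ne_one hp hoa
  have hb := ne_one hq hob
  have hba : (powerGraphStar G).Reachable ⟨b, hb⟩ ⟨a, ha⟩ :=
    powerGraphStar.reachable_of_mem_center hb ha ha_center (hoa ▸ hp)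
      (by rw [hoa, hob, Nat.prime_dvd_prime_iff_eq hp hq]; exact hpq)
  have to_a : ∀ x : {g : G // g ≠ 1}, (powerGraphStar G).Reachable x ⟨a, ha⟩ := by
    rintro ⟨x, hx⟩
    by_cases hpx : p ∣ orderOf x
    · have hoy := orderOf_pow_orderOf_div (orderOf_pos x).ne' hpx
      have hy := ne_one hp hoy
      have hyb := powerGraphStar.reachable_of_mem_center hy hb hb_center (hob ▸ hq)
        (by rw [hob, hoy, Nat.prime_dvd_prime_iff_eq hq hp]; exact hpq.symm)
      exact (powerGraphStar.reachable_of_eq_pow hx hy rfl).trans (hyb.trans hba)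
    · exact powerGraphStar.reachable_of_mem_center hx ha ha_center (hoa ▸ hp) (hoa ▸ hpx)
  have : Nonempty {g : G // g ≠ 1} := ⟨⟨a, ha⟩⟩
  exact ⟨fun u v => (to_a u).trans (to_a v).symm⟩
end
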